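/- (q-Vandermonde) For all m, u, n ≥ 0: ∑_{κ} [m choose κ]_q [u choose n-κ]_q q^{(m-κ)(n-κ)} = [m+u choose n]_q. -/

import Mathlib

/-- The `q`-analog `[n]_q = 1 + q + ⋯ + q^(n-1)` of a natural number. -/
def qNum {R : Type*} [CommRing R] (q : R) (n : ℕ) : R := ∑ i ∈ Finset.range n, q ^ i

/-- The `q`-factorial `[n]! = [1][2]⋯[n]`. -/
def qFact {R : Type*} [CommRing R] (q : R) (n : ℕ) : R := ∏ i ∈ Finset.range n, qNum q (i + 1)

/-- The Gaussian (`q`-)binomial coefficient, via the `q`-Pascal recursion. -/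
def qBinom {R : Type*} [CommRing R] (q : R) : ℕ → ℕ → R
  | _, 0 => 1
  | 0, _ + 1 => 0
  | n + 1, k + 1 => qBinom q n k + q ^ (k + 1) * qBinom q n (k + 1)

/-- The `q`-shifted product `(1 −· p)^m = ∏_{i=0}^{m-1} (1 - p q^i)`. -/
def qProdSub {R : Type*} [CommRing R] (q p : R) (m : ℕ) : R :=
  ∏ i ∈ Finset.range m, (1 - p * q ^ i)

/-- The `q`-shifted power `(x +· y)^m = ∏_{i=0}^{m-1} (x + q^i y)`. -/
def qProdAdd {R : Type*} [CommRing R] (q x y : R) (m : ℕ) : R :=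
  ∏ i ∈ Finset.range m, (x + q ^ i * y)

/-!
Induction on `m`. The `q`-Pascal rule `[m+1, κ] = [m, κ-1] + q^κ [m, κ]` splits the sum for
`(m + 1, n)` into the sum for `(m, n - 1)` plus `q^n` times the sum for `(m, n)`, because
`q^κ q^((m+1-κ)(n-κ)) = q^n q^((m-κ)(n-κ))` whenever `[m, κ] ≠ 0`. By induction these are
`[m+u, n-1] + q^n [m+u, n]`, which is `[m+u+1, n]` by `q`-Pascal again.
-/

open Finset Finset.Nat

section

variable {R : Type*} [CommRing R] (q : R)

lemma qBinom_zero_right (n : ℕ) : qBinom q n 0 = 1 := by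
  cases n <;> rfl

lemma qBinom_zero_succ (k : ℕ) : qBinom q 0 (k + 1) = 0 := rfl

lemma qBinom_succ_succ (n k : ℕ) :
    qBinom q (n + 1) (k + 1) = qBinom q n k + q ^ (k + 1) * qBinom q n (k + 1) := rfl

lemma qBinom_eq_zero_of_lt {n k : ℕ} (h : n < k) : qBinom q n k = 0 := by
  induction n generalizing k with
  | zero => obtain ⟨k, rfl⟩ := Nat.exists_eq_add_one_of_ne_zero h.ne'; rfl
  | succ n ih =>
    obtain ⟨k, rfl⟩ := Nat.exists_eq_add_one_of_ne_zero (Nat.ne_zero_of_lt h)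
    rw [qBinom_succ_succ, ih (by omega), ih (by omega), mul_zero, add_zero]

/-- The coefficient vanishes unless `k + 1 ≤ m`, where `(m - k) * j = (m - (k + 1)) * j + j`. -/
lemma qBinom_succ_mul_pow_sub (m k j : ℕ) :
    qBinom q m (k + 1) * q ^ ((m - k) * j) =
      qBinom q m (k + 1) * (q ^ j * q ^ ((m - (k + 1)) * j)) := by
  rcases le_or_gt (k + 1) m with h | h
  · rw [← pow_add]
    congr 2
    obtain ⟨d, rfl⟩ := Nat.exists_eq_add_of_le h
    rw [Nat.add_sub_cancel_left, show k + 1 + d - k = d + 1 by omega]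
    ring
  · rw [qBinom_eq_zero_of_lt q h, zero_mul, zero_mul]

/-- Indexed by the pairs `κ + j = n`, so that no truncated subtraction `n - κ` occurs. -/
def qVandermondeSum (m u n : ℕ) : R :=
  ∑ p ∈ antidiagonal n, qBinom q m p.1 * qBinom q u p.2 * q ^ ((m - p.1) * p.2)

/-- `q`-Pascal applied to the first factor of every term. -/
lemma qVandermondeSum_succ_succ (m u n : ℕ) :
    qVandermondeSum q (m + 1) u (n + 1) =
      qVandermondeSum q m u n + q ^ (n + 1) * qVandermondeSum q m u (n + 1) := by
  have pascal : ∀ p ∈ antidiagonal n,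
      qBinom q (m + 1) (p.1 + 1) * qBinom q u p.2 * q ^ ((m + 1 - (p.1 + 1)) * p.2) =
        qBinom q m p.1 * qBinom q u p.2 * q ^ ((m - p.1) * p.2) +
          q ^ (n + 1) * (qBinom q m (p.1 + 1) * qBinom q u p.2 * q ^ ((m - (p.1 + 1)) * p.2)) := by
    intro p hp
    rw [HasAntidiagonal.mem_antidiagonal] at hp
    rw [Nat.add_sub_add_right, qBinom_succ_succ, ← hp]
    linear_combination (q ^ (p.1 + 1) * qBinom q u p.2) * qBinom_succ_mul_pow_sub q m p.1 p.2
  simp only [qVandermondeSum, sum_antidiagonal_succ, sum_congr rfl pascal, sum_add_distrib,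
    mul_add, mul_sum, qBinom_zero_right, Nat.sub_zero]
  ring

lemma qVandermondeSum_eq_qBinom (m u n : ℕ) : qVandermondeSum q m u n = qBinom q (m + u) n := by
  induction m generalizing n with
  | zero =>
    cases n with
    | zero => simp [qVandermondeSum, qBinom_zero_right]
    | succ n => simp [qVandermondeSum, sum_antidiagonal_succ, qBinom_zero_succ, qBinom_zero_right]
  | succ m ih =>
    cases n with
    | zero => simp [qVandermondeSum, qBinom_zero_right]
    | succ n =>
      rw [qVandermondeSum_succ_succ, ih, ih, Nat.add_right_comm, qBinom_succ_succ]

end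

/-- q-Vandermonde identity (5.3):
`∑_κ [m choose κ] [u choose n-κ] q^{(m-κ)(n-κ)} = [m+u choose n]`. -/
theorem qVandermonde {R : Type*} [CommRing R] (q : R) (m u n : ℕ) :
    ∑ κ ∈ Finset.range (n + 1),
        qBinom q m κ * qBinom q u (n - κ) * q ^ ((m - κ) * (n - κ)) =
      qBinom q (m + u) n := by
  rw [← sum_antidiagonal_eq_sum_range_succ
    (fun i j ↦ qBinom q m i * qBinom q u j * q ^ ((m - i) * j))]
  exact qVandermondeSum_eq_qBinom q m u n
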